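/- (Conservation on a rectangle) Let X, Y ≥ 1 and let C(a,b) = (i(a,b), j(a,b), k(a,b), l(a,b)) ∈ {0,1}⁴ for 1 ≤ a ≤ X, 1 ≤ b ≤ Y be a family satisfying the edge compatibility i(a,b+1) = k(a,b) for b < Y and j(a+1,b) = l(a,b) for a < X, and such that L̂¹(i(a,b), j(a,b); k(a,b), l(a,b)) ≠ 0 in W for every (a,b). Then Σ_{a=1}^X i(a,1) + Σ_{b=1}^Y l(X,b) = Σ_{a=1}^X k(a,Y) + Σ_{b=1}^Y j(1,b); that is, the number of lines crossing the bottom and right boundaries of the rectangle equals the number crossing the top and left boundaries. -/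

import Mathlib

/-- Exponents of the indeterminates `b₁` (resp. `b₂`) appearing in a formal weight:
`e` for exponent zero (factor `1`), `pl` for the factor `bᵢ`, `mi` for the factor `1 - bᵢ`. -/
inductive Eps : Type
  | e : Eps
  | pl : Eps
  | mi : Eps
deriving DecidableEq

instance instFintypeEps : Fintype Eps :=
  ⟨{Eps.e, Eps.pl, Eps.mi}, fun x => by cases x <;> simp⟩

/-- The 10-element set of formal weights: `none` represents `0`, and `some (ε₁, ε₂)`
represents the monomial `f₁(ε₁) f₂(ε₂)`. -/
abbrev Wt : Type := Option (Eps × Eps)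

/-- The join operation on exponents: `a ∨ a = a`, `e ∨ a = a ∨ e = a`, and the
clash `{+, −}` gives `none` (i.e. the factor `0`). -/
def Eps.vee : Eps → Eps → Option Eps
  | .e, a => some a
  | a, .e => some a
  | .pl, .pl => some .pl
  | .mi, .mi => some .mi
  | .pl, .mi => none
  | .mi, .pl => none

/-- The Boolean-type product `*` on the formal weight set `Wt`. -/
def wmul : Wt → Wt → Wt
  | none, _ => none
  | _, none => none
  | some (a₁, a₂), some (c₁, c₂) =>
    match a₁.vee c₁, a₂.vee c₂ with
    | some x, some y => some (x, y)
    | _, _ => none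

/-- The formal one-colored vertex weights `L̂¹(i, j; k, l) ∈ W`
(`i` = bottom input, `j` = left input, `k` = top output, `l` = right output,
with `true` standing for `1`). -/
def Lhat1 : Bool → Bool → Bool → Bool → Wt
  | true, false, true, false => some (.e, .e)
  | false, true, false, true => some (.e, .e)
  | false, false, false, false => some (.e, .pl)
  | false, false, true, true => some (.e, .mi)
  | true, true, true, true => some (.pl, .e)
  | true, true, false, false => some (.mi, .e)
  | _, _, _, _ => none

/-! Every admissible vertex conserves lines: `i + l = k + j`. Summing this over the rectangle,
each interior edge is counted once as an output of one vertex and once as an input of its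
neighbour, so only the edges on the boundary survive. -/

open Finset

theorem sum_Icc_add_eq_add_sum_Icc_of_succ_eq {M : Type*} [AddCommMonoid M] (f g : ℕ → M)
    {n : ℕ} (hn : 1 ≤ n) (hfg : ∀ b, 1 ≤ b → b < n → f (b + 1) = g b) :
    ∑ b ∈ Icc 1 n, f b + g n = f 1 + ∑ b ∈ Icc 1 n, g b := by
  induction n, hn using Nat.le_induction with
  | base => simp
  | succ n hn ih =>
    calc ∑ b ∈ Icc 1 (n + 1), f b + g (n + 1)
        = (∑ b ∈ Icc 1 n, f b + g n) + g (n + 1) := by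
          rw [sum_Icc_succ_top (by omega), hfg n hn (by omega)]
      _ = f 1 + ∑ b ∈ Icc 1 (n + 1), g b := by
          rw [ih fun b hb hbn => hfg b hb (by omega), sum_Icc_succ_top (by omega), add_assoc]

theorem sum_Icc_Icc_boundary_eq {M : Type*} [AddCancelCommMonoid M] (I J K L : ℕ → ℕ → M)
    {X Y : ℕ} (hX : 1 ≤ X) (hY : 1 ≤ Y)
    (hV : ∀ a b, 1 ≤ a → a ≤ X → 1 ≤ b → b < Y → I a (b + 1) = K a b)
    (hH : ∀ a b, 1 ≤ a → a < X → 1 ≤ b → b ≤ Y → J (a + 1) b = L a b)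
    (hvertex : ∀ a b, 1 ≤ a → a ≤ X → 1 ≤ b → b ≤ Y → I a b + L a b = K a b + J a b) :
    ∑ a ∈ Icc 1 X, I a 1 + ∑ b ∈ Icc 1 Y, L X b =
      ∑ a ∈ Icc 1 X, K a Y + ∑ b ∈ Icc 1 Y, J 1 b := by
  set SI := ∑ a ∈ Icc 1 X, ∑ b ∈ Icc 1 Y, I a b
  set SJ := ∑ a ∈ Icc 1 X, ∑ b ∈ Icc 1 Y, J a b
  set SK := ∑ a ∈ Icc 1 X, ∑ b ∈ Icc 1 Y, K a b
  set SL := ∑ a ∈ Icc 1 X, ∑ b ∈ Icc 1 Y, L a b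
  have columns : SI + ∑ a ∈ Icc 1 X, K a Y = ∑ a ∈ Icc 1 X, I a 1 + SK := by
    simp only [SI, SK, ← sum_add_distrib]
    refine sum_congr rfl fun a ha => ?_
    rw [mem_Icc] at ha
    exact sum_Icc_add_eq_add_sum_Icc_of_succ_eq _ _ hY (hV a · ha.1 ha.2)
  have rows : SJ + ∑ b ∈ Icc 1 Y, L X b = ∑ b ∈ Icc 1 Y, J 1 b + SL := by
    simp only [SJ, SL, sum_comm (s := Icc 1 X), ← sum_add_distrib]
    refine sum_congr rfl fun b hb => ?_
    rw [mem_Icc] at hb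
    exact sum_Icc_add_eq_add_sum_Icc_of_succ_eq (J · b) (L · b) hX (hH · b · · hb.1 hb.2)
  have vertices : SI + SL = SK + SJ := by
    simp only [SI, SJ, SK, SL, ← sum_add_distrib]
    refine sum_congr rfl fun a ha => sum_congr rfl fun b hb => ?_
    rw [mem_Icc] at ha hb
    exact hvertex a b ha.1 ha.2 hb.1 hb.2
  refine add_right_cancel (b := SK + SJ) ?_
  calc ∑ a ∈ Icc 1 X, I a 1 + ∑ b ∈ Icc 1 Y, L X b + (SK + SJ)
      = (∑ a ∈ Icc 1 X, I a 1 + SK) + (SJ + ∑ b ∈ Icc 1 Y, L X b) := by abel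
    _ = ∑ a ∈ Icc 1 X, K a Y + ∑ b ∈ Icc 1 Y, J 1 b + (SI + SL) := by
      rw [← columns, rows]; abel
    _ = ∑ a ∈ Icc 1 X, K a Y + ∑ b ∈ Icc 1 Y, J 1 b + (SK + SJ) := by rw [vertices]

theorem Lhat1_ne_none_conserves_lines {i j k l : Bool} (h : Lhat1 i j k l ≠ (none : Wt)) :
    (if i then (1 : ℕ) else 0) + (if l then 1 else 0) =
      (if k then 1 else 0) + (if j then 1 else 0) := by
  revert i j k l
  decide

/-- Conservation of lines on a rectangle: for any family of vertex configurations of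
nonzero formal weight on `[1,X] × [1,Y]` satisfying the edge compatibility relations,
the number of lines crossing the bottom and right boundaries equals the number of
lines crossing the top and left boundaries. -/
theorem one_colored_conservation
    (X Y : ℕ) (hX : 1 ≤ X) (hY : 1 ≤ Y)
    (ii jj kk ll : ℕ → ℕ → Bool)
    (hcompatV : ∀ a b, 1 ≤ a → a ≤ X → 1 ≤ b → b < Y → ii a (b + 1) = kk a b)
    (hcompatH : ∀ a b, 1 ≤ a → a < X → 1 ≤ b → b ≤ Y → jj (a + 1) b = ll a b)
    (hadm : ∀ a b, 1 ≤ a → a ≤ X → 1 ≤ b → b ≤ Y →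
      Lhat1 (ii a b) (jj a b) (kk a b) (ll a b) ≠ (none : Wt)) :
    (∑ a ∈ Finset.Icc 1 X, (if ii a 1 then (1 : ℕ) else 0)) +
        (∑ b ∈ Finset.Icc 1 Y, (if ll X b then (1 : ℕ) else 0)) =
      (∑ a ∈ Finset.Icc 1 X, (if kk a Y then (1 : ℕ) else 0)) +
        ∑ b ∈ Finset.Icc 1 Y, (if jj 1 b then (1 : ℕ) else 0) := by
  exact sum_Icc_Icc_boundary_eq
    (fun a b => if ii a b then 1 else 0) (fun a b => if jj a b then 1 else 0)
    (fun a b => if kk a b then 1 else 0) (fun a b => if ll a b then 1 else 0) hX hY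
    (fun a b ha ha' hb hb' => by simp only [hcompatV a b ha ha' hb hb'])
    (fun a b ha ha' hb hb' => by simp only [hcompatH a b ha ha' hb hb'])
    (fun a b ha ha' hb hb' => Lhat1_ne_none_conserves_lines (hadm a b ha ha' hb hb'))
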